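/- arXiv:1104.2222 — 4 statements merged into one kernel-verified Lean document; each statement's English description precedes it below -/
import Mathlib

section
/- Let A be a commutative ring and let x, y ∈ W(A) be Witt vectors such that x_i = y_i = 0 for i ≥ M and x_i^N = y_i^N = 0 for all i, where M, N ≥ 1 are integers. Then every coefficient of the sum s = x + y in W(A) is nilpotent, and s_i = 0 for all sufficiently large i (with a bound depending only on p, M, N). In particular, the set of Witt vectors with all coefficients nilpotent and only finitely many nonzero coefficients is closed under addition. -/
/-!
Give the variables `X_i, Y_i` of the Witt addition polynomial `S_n` the weight `p ^ i`. The ghost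
identity `p ^ n S_n = W_n(X) + W_n(Y) - ∑_{i < n} p ^ i S_i ^ (p ^ (n - i))` shows by induction
that `p ^ n S_n`, hence `S_n` (coefficients in `ℤ`), is isobaric of weight `p ^ n`. At `(x, y)`
only the `2M` variables of index `< M` survive, with exponents `< N` in any nonvanishing
monomial, and such a monomial has weight at most `2MN p ^ M < p ^ n` once `n ≥ M + 2MN`.
Nilpotency of the coefficients holds because `x` and `y` vanish in `W(A ⧸ nilradical A)`.
-/

open MvPolynomial Finsupp

namespace MvPolynomial.IsWeightedHomogeneous

variable {R S σ τ M : Type*} [CommSemiring R] [CommSemiring S] [Algebra R S] [AddCommMonoid M]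

theorem aeval {v : σ → M} {w : τ → M} {φ : MvPolynomial σ R} {m : M}
    (hφ : IsWeightedHomogeneous v φ m) (g : σ → MvPolynomial τ S)
    (hg : ∀ i, IsWeightedHomogeneous w (g i) (v i)) :
    IsWeightedHomogeneous w (aeval g φ) m := by
  rw [aeval_def, eval₂_eq]
  refine IsWeightedHomogeneous.sum _ _ _ fun d hd => ?_
  have hdeg : ∑ i ∈ d.support, d i • v i = m := hφ (mem_support_iff.mp hd)
  rw [← hdeg]
  exact (IsWeightedHomogeneous.prod _ _ _ fun i _ => (hg i).pow (d i)).C_mul _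

theorem rename {w : τ → M} {φ : MvPolynomial σ R} {m : M} (f : σ → τ)
    (hφ : IsWeightedHomogeneous (w ∘ f) φ m) : IsWeightedHomogeneous w (rename f φ) m :=
  (rename_eq_aeval (R := R) f) ▸ hφ.aeval (X ∘ f) fun i => isWeightedHomogeneous_X R w (f i)

theorem of_C_mul [NoZeroDivisors R] {w : σ → M} {φ : MvPolynomial σ R} {m : M} {r : R}
    (hr : r ≠ 0) (h : IsWeightedHomogeneous w (C r * φ) m) : IsWeightedHomogeneous w φ m :=
  fun d hd => h (by rw [coeff_C_mul]; exact mul_ne_zero hr hd)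

end MvPolynomial.IsWeightedHomogeneous

theorem MvPolynomial.IsHomogeneous.isWeightedHomogeneous_const {R σ M : Type*} [CommSemiring R]
    [AddCommMonoid M] {φ : MvPolynomial σ R} {k : ℕ} (hφ : φ.IsHomogeneous k) (m : M) :
    IsWeightedHomogeneous (fun _ => m) φ (k • m) := by
  intro d hd
  rw [← hφ hd, weight_apply, weight_apply, Finsupp.sum, Finsupp.sum, Finset.sum_smul]
  simp

section WittPolynomials

variable (p : ℕ)

theorem isWeightedHomogeneous_wittPolynomial (R : Type*) [CommRing R] (n : ℕ) :
    IsWeightedHomogeneous (p ^ ·) (wittPolynomial p R n) (p ^ n) := by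
  refine IsWeightedHomogeneous.sum _ _ _ fun i hi => isWeightedHomogeneous_monomial _ _ _ ?_
  rw [weight_single, smul_eq_mul, ← pow_add, Nat.sub_add_cancel (Nat.lt_succ_iff.mp
    (Finset.mem_range.mp hi))]

variable [Fact p.Prime] {idx : Type*}

theorem isWeightedHomogeneous_wittStructureInt {Φ : MvPolynomial idx ℤ} {k : ℕ}
    (hΦ : Φ.IsHomogeneous k) (n : ℕ) :
    IsWeightedHomogeneous (fun v : idx × ℕ => p ^ v.2) (wittStructureInt p Φ n) (k * p ^ n) := by
  induction n using Nat.strong_induction_on with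
  | h n ih =>
  have hghost : IsWeightedHomogeneous (fun v : idx × ℕ => p ^ v.2)
      (bind₁ (wittStructureInt p Φ) (wittPolynomial p ℤ n)) (k * p ^ n) := by
    rw [wittStructureInt_prop, ← smul_eq_mul]
    exact (hΦ.isWeightedHomogeneous_const _).aeval _ fun b =>
      (isWeightedHomogeneous_wittPolynomial p ℤ n).rename (Prod.mk b)
  rw [← aeval_eq_bind₁, aeval_wittPolynomial, Finset.sum_range_succ, Nat.sub_self, pow_zero,
    pow_one] at hghost
  have hlower : IsWeightedHomogeneous (fun v : idx × ℕ => p ^ v.2)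
      (∑ i ∈ Finset.range n, (p : MvPolynomial (idx × ℕ) ℤ) ^ i *
        wittStructureInt p Φ i ^ p ^ (n - i)) (k * p ^ n) := by
    refine IsWeightedHomogeneous.sum _ _ _ fun i hi => ?_
    have hi := Finset.mem_range.mp hi
    rw [← map_natCast C, ← map_pow]
    convert ((ih i hi).pow (p ^ (n - i))).C_mul _ using 1
    rw [smul_eq_mul, mul_left_comm, ← pow_add, Nat.sub_add_cancel hi.le]
  have htop := hghost.sub hlower
  rw [add_sub_cancel_left, ← map_natCast C, ← map_pow] at htop
  exact htop.of_C_mul (pow_ne_zero _ (Nat.cast_ne_zero.mpr (Fact.out : p.Prime).ne_zero))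

theorem isWeightedHomogeneous_wittAdd (n : ℕ) :
    IsWeightedHomogeneous (fun v : Fin 2 × ℕ => p ^ v.2) (WittVector.wittAdd p n) (p ^ n) := by
  simpa [WittVector.wittAdd] using isWeightedHomogeneous_wittStructureInt p
    ((isHomogeneous_X ℤ (0 : Fin 2)).add (isHomogeneous_X ℤ 1)) n

end WittPolynomials

theorem Finsupp.weight_pow_snd_le {idx : Type*} [Fintype idx] {p M N : ℕ} (hp : 0 < p)
    {d : idx × ℕ →₀ ℕ} (hd : ∀ v ∈ d.support, v.2 < M ∧ d v ≤ N) :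
    weight (fun v : idx × ℕ => p ^ v.2) d ≤ Fintype.card idx * M * N * p ^ M := by
  classical
  have hsupp : d.support ⊆ Finset.univ ×ˢ Finset.range M := fun v hv => by
    simpa using (hd v hv).1
  calc weight (fun v : idx × ℕ => p ^ v.2) d = ∑ v ∈ d.support, d v * p ^ v.2 := rfl
    _ ≤ ∑ v ∈ d.support, N * p ^ M := Finset.sum_le_sum fun v hv =>
        Nat.mul_le_mul (hd v hv).2 (Nat.pow_le_pow_right hp (hd v hv).1.le)
    _ = d.support.card * (N * p ^ M) := by rw [Finset.sum_const, smul_eq_mul]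
    _ ≤ (Finset.univ ×ˢ Finset.range M).card * (N * p ^ M) :=
        Nat.mul_le_mul_right _ (Finset.card_le_card hsupp)
    _ = Fintype.card idx * M * N * p ^ M := by simp [mul_assoc]

theorem MvPolynomial.aeval_eq_zero_of_isWeightedHomogeneous {R A idx : Type*} [CommSemiring R]
    [CommSemiring A] [Algebra R A] [Fintype idx] {p M N m : ℕ} (hp : 0 < p)
    {f : idx × ℕ → A} (hf : ∀ v, M ≤ v.2 → f v = 0) (hfN : ∀ v, f v ^ N = 0)
    {P : MvPolynomial (idx × ℕ) R} (hP : IsWeightedHomogeneous (fun v : idx × ℕ => p ^ v.2) P m)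
    (hm : Fintype.card idx * M * N * p ^ M < m) : aeval f P = 0 := by
  rw [aeval_def, eval₂_eq]
  refine Finset.sum_eq_zero fun d hd => ?_
  suffices ∃ v ∈ d.support, f v ^ d v = 0 by
    obtain ⟨v, hv, hzero⟩ := this
    rw [Finset.prod_eq_zero hv hzero, mul_zero]
  by_contra! hnonzero
  refine (hm.trans_le ?_).false
  rw [← hP (mem_support_iff.mp hd)]
  refine Finsupp.weight_pow_snd_le hp fun v hv => ⟨?_, ?_⟩
  · by_contra! hM
    exact hnonzero v hv (by rw [hf v hM, zero_pow (Finsupp.mem_support_iff.mp hv)])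
  · by_contra! hN
    exact hnonzero v hv (by rw [← Nat.sub_add_cancel hN.le, pow_add, hfN, mul_zero])

namespace WittVector

variable {p : ℕ} [hp : Fact p.Prime] {A : Type*} [CommRing A]

theorem map_mk_nilradical_eq_zero_iff {x : WittVector p A} :
    map (Ideal.Quotient.mk (nilradical A)) x = 0 ↔ ∀ i, IsNilpotent (x.coeff i) := by
  simp only [map_eq_zero_iff, Ideal.Quotient.eq_zero_iff_mem, mem_nilradical]

theorem isNilpotent_add_coeff {x y : WittVector p A} (hx : ∀ i, IsNilpotent (x.coeff i))
    (hy : ∀ i, IsNilpotent (y.coeff i)) (n : ℕ) : IsNilpotent ((x + y).coeff n) := by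
  refine map_mk_nilradical_eq_zero_iff.mp ?_ n
  rw [map_add, map_mk_nilradical_eq_zero_iff.mpr hx, map_mk_nilradical_eq_zero_iff.mpr hy,
    add_zero]

theorem add_coeff_eq_zero {M N n : ℕ} {x y : WittVector p A} (hxM : ∀ i, M ≤ i → x.coeff i = 0)
    (hyM : ∀ i, M ≤ i → y.coeff i = 0) (hxN : ∀ i, x.coeff i ^ N = 0)
    (hyN : ∀ i, y.coeff i ^ N = 0) (hn : M + 2 * M * N ≤ n) : (x + y).coeff n = 0 := by
  have hp2 := hp.out.two_le
  rw [add_coeff, peval]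
  refine aeval_eq_zero_of_isWeightedHomogeneous (M := M) (N := N) hp.out.pos ?_ ?_
    (isWeightedHomogeneous_wittAdd p n) ?_
  · rintro ⟨b, i⟩ hi
    fin_cases b
    exacts [hxM i hi, hyM i hi]
  · rintro ⟨b, i⟩
    fin_cases b
    exacts [hxN i, hyN i]
  · calc Fintype.card (Fin 2) * M * N * p ^ M < p ^ (n - M) * p ^ M := by
          rw [Fintype.card_fin]
          exact Nat.mul_lt_mul_of_pos_right ((Nat.lt_pow_self hp2).trans_le
            (Nat.pow_le_pow_right hp.out.pos (by omega))) (by positivity)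
      _ = p ^ n := by rw [← pow_add, Nat.sub_add_cancel (by omega)]

end WittVector

theorem stmt1_general (p : ℕ) [hp : Fact p.Prime] (M N : ℕ) :
    ∃ K : ℕ, ∀ (A : Type) [CommRing A] (x y : WittVector p A),
      (∀ i, M ≤ i → x.coeff i = 0) → (∀ i, M ≤ i → y.coeff i = 0) →
      (∀ i, x.coeff i ^ N = 0) → (∀ i, y.coeff i ^ N = 0) →
      (∀ i, IsNilpotent ((x + y).coeff i)) ∧ (∀ i, K ≤ i → (x + y).coeff i = 0) :=
  ⟨M + 2 * M * N, fun _ _ _ _ hxM hyM hxN hyN =>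
    ⟨WittVector.isNilpotent_add_coeff (fun i => ⟨N, hxN i⟩) (fun i => ⟨N, hyN i⟩),
      fun _ hi => WittVector.add_coeff_eq_zero hxM hyM hxN hyN hi⟩⟩

theorem stmt1 (p : ℕ) [hp : Fact p.Prime] (M N : ℕ) (hM : 1 ≤ M) (hN : 1 ≤ N) :
    ∃ K : ℕ, ∀ (A : Type) [CommRing A] (x y : WittVector p A),
      (∀ i, M ≤ i → x.coeff i = 0) → (∀ i, M ≤ i → y.coeff i = 0) →
      (∀ i, x.coeff i ^ N = 0) → (∀ i, y.coeff i ^ N = 0) →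
      (∀ i, IsNilpotent ((x + y).coeff i)) ∧ (∀ i, K ≤ i → (x + y).coeff i = 0) :=
  stmt1_general p (hp := hp) M N
end

section
/- The formal completion Ŵ(A) = { a ∈ W(A) : all coefficients a_i are nilpotent and only finitely many are nonzero } is an ideal of the Witt ring W(A): it is an additive subgroup and for every a ∈ W(A) and u ∈ Ŵ(A), the product a·u lies in Ŵ(A). -/
/-!
Both conditions on `u ∈ Ŵ(A)` are captured by a single ideal: if the coefficients of `u` lie in a
finitely generated nil ideal `I`, with `I ^ K = 0`, and vanish from index `M` on, then
`u_n ∈ I ^ ⌈p ^ n / p ^ M⌉` for every `n`, and conversely this forces `u_n ∈ I` and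
`u_n = 0` as soon as `p ^ (n - M) ≥ K`. The Witt vectors with `z_n ∈ I ^ ⌈p ^ n / c⌉` form an
ideal because the Witt polynomials are isobaric when `X_n` has weight `p ^ n`: multiplying by the
Teichmüller representative `[X]` over `A[X]` sends `z` to `(z_n X ^ p ^ n)_n`, and the condition
becomes membership of the coefficients in a subring of `A[X]`.
-/

open WittVector

/-- Membership in the formal completion `Ŵ(A)` of the Witt ring. -/
def InWhat (p : ℕ) {A : Type*} [CommRing A] (a : WittVector p A) : Prop :=
  (∀ i, IsNilpotent (a.coeff i)) ∧ ∃ M : ℕ, ∀ i, M ≤ i → a.coeff i = 0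

theorem InWhat.exists_fg_le_nilradical {p : ℕ} {A : Type*} [CommRing A] {u : WittVector p A}
    (hu : InWhat p u) : ∃ I : Ideal A, I.FG ∧ I ≤ nilradical A ∧ ∀ n, u.coeff n ∈ I := by
  obtain ⟨hnil, M, hM⟩ := hu
  refine ⟨Ideal.span (u.coeff '' Set.Iio M), Submodule.fg_span ((Set.finite_Iio M).image _), ?_,
    fun n => ?_⟩
  · rw [Ideal.span_le]
    rintro _ ⟨i, -, rfl⟩
    exact mem_nilradical.2 (hnil i)
  · rcases lt_or_ge n M with hn | hn
    · exact Ideal.subset_span ⟨n, hn, rfl⟩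
    · rw [hM n hn]
      exact zero_mem _

open Polynomial

theorem Nat.ceilDiv_add_le (c j k : ℕ) : (j + k) ⌈/⌉ c ≤ j ⌈/⌉ c + k ⌈/⌉ c := by
  rcases Nat.eq_zero_or_pos c with rfl | hc
  · simp
  rw [ceilDiv_le_iff_le_mul hc, mul_add]
  have hj : j ≤ c * (j ⌈/⌉ c) := le_smul_ceilDiv hc
  have hk : k ≤ c * (k ⌈/⌉ c) := le_smul_ceilDiv hc
  omega

namespace Ideal

variable {A : Type*} [CommRing A]

def ceilDivRees (I : Ideal A) (c : ℕ) : Subring A[X] where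
  carrier := {f | ∀ j, f.coeff j ∈ I ^ (j ⌈/⌉ c)}
  zero_mem' _ := by simp
  one_mem' j := by
    rcases eq_or_ne j 0 with rfl | hj
    · simp
    · simp [coeff_one, hj]
  add_mem' hf hg j := by
    rw [coeff_add]
    exact add_mem (hf j) (hg j)
  neg_mem' hf j := by
    rw [coeff_neg]
    exact neg_mem (hf j)
  mul_mem' {f g} hf hg j := by
    rw [coeff_mul]
    refine Submodule.sum_mem _ fun x hx => ?_
    rw [← Finset.HasAntidiagonal.mem_antidiagonal.mp hx]
    exact pow_le_pow_right (Nat.ceilDiv_add_le c x.1 x.2)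
      (pow_add I _ _ ▸ mul_mem_mul (hf x.1) (hg x.2))

theorem monomial_mem_ceilDivRees_iff (I : Ideal A) (c j : ℕ) (a : A) :
    monomial j a ∈ I.ceilDivRees c ↔ a ∈ I ^ (j ⌈/⌉ c) := by
  refine ⟨fun h => by simpa using h j, fun ha k => ?_⟩
  rw [coeff_monomial]
  split_ifs with hjk
  · exact hjk ▸ ha
  · exact zero_mem _

theorem C_mem_ceilDivRees (I : Ideal A) (c : ℕ) (a : A) : C a ∈ I.ceilDivRees c := by
  simp [← monomial_zero_left, monomial_mem_ceilDivRees_iff]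

end Ideal

namespace WittVector

variable {p : ℕ} [hp : Fact p.Prime]

theorem ghostComponent_mk_pow_mul {R : Type*} [CommRing R] (r : R) (x : WittVector p R)
    (n : ℕ) :
    ghostComponent n (mk p fun i => r ^ p ^ i * x.coeff i) = r ^ p ^ n * ghostComponent n x := by
  simp only [ghostComponent_apply, aeval_wittPolynomial, Finset.mul_sum]
  refine Finset.sum_congr rfl fun i hi => ?_
  have hpow : p ^ i * p ^ (n - i) = p ^ n := pow_mul_pow_sub p (Finset.mem_range_succ_iff.mp hi)
  rw [coeff_mk, mul_pow, ← pow_mul, hpow]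
  ring

private theorem teichmuller_mul_eq_mk_of_mvPolynomial {σ : Type*} (r : MvPolynomial σ ℤ)
    (x : WittVector p (MvPolynomial σ ℤ)) :
    teichmuller p r * x = mk p fun n => r ^ p ^ n * x.coeff n := by
  refine map_injective (MvPolynomial.map (Int.castRingHom ℚ))
    (MvPolynomial.map_injective _ Int.cast_injective) ?_
  apply (ghostMap.bijective_of_invertible p (MvPolynomial σ ℚ)).1
  ext n
  have hmap : map (MvPolynomial.map (Int.castRingHom ℚ)) (mk p fun n => r ^ p ^ n * x.coeff n)
      = mk p fun n => MvPolynomial.map (Int.castRingHom ℚ) r ^ p ^ n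
          * (map (MvPolynomial.map (Int.castRingHom ℚ)) x).coeff n := by
    ext n
    simp [map_coeff]
  simp only [map_mul, map_teichmuller, hmap, ghostMap_apply,
    ghostComponent_teichmuller, ghostComponent_mk_pow_mul]

theorem teichmuller_mul_coeff {R : Type*} [CommRing R] (r : R) (x : WittVector p R) (n : ℕ) :
    (teichmuller p r * x).coeff n = r ^ p ^ n * x.coeff n := by
  let φ : MvPolynomial (Option ℕ) ℤ →+* R :=
    (MvPolynomial.aeval fun o : Option ℕ => o.elim r x.coeff).toRingHom
  let X' : WittVector p (MvPolynomial (Option ℕ) ℤ) := mk p fun i => MvPolynomial.X (some i)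
  have hr : φ (MvPolynomial.X none) = r := by simp [φ]
  have hx : map φ X' = x := by
    ext i
    simp [map_coeff, φ, X']
  rw [← hr, ← hx, ← map_teichmuller, ← map_mul, teichmuller_mul_eq_mk_of_mvPolynomial,
    map_coeff, coeff_mk, map_mul, map_pow, ← map_coeff]

theorem mem_range_map_subtype_iff {R : Type*} [CommRing R] (T : Subring R)
    (x : WittVector p R) : x ∈ (map (p := p) T.subtype).range ↔ ∀ n, x.coeff n ∈ T := by
  refine ⟨?_, fun h => ⟨mk p fun n => ⟨x.coeff n, h n⟩, by ext; simp [map_coeff]⟩⟩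
  rintro ⟨w, rfl⟩ n
  simp [map_coeff]

section WeightedPowIdeal

variable {A : Type*} [CommRing A]

theorem teichmuller_X_mul_map_C_mem_range_iff (I : Ideal A) (c : ℕ) (z : WittVector p A) :
    teichmuller p X * map C z ∈ (map (p := p) (I.ceilDivRees c).subtype).range ↔
      ∀ n, z.coeff n ∈ I ^ (p ^ n ⌈/⌉ c) := by
  simp only [mem_range_map_subtype_iff, teichmuller_mul_coeff, map_coeff, mul_comm (X ^ _),
    C_mul_X_pow_eq_monomial, Ideal.monomial_mem_ceilDivRees_iff]

variable (p) in
def weightedPowIdeal (I : Ideal A) (c : ℕ) : Ideal (WittVector p A) where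
  carrier := {z | ∀ n, z.coeff n ∈ I ^ (p ^ n ⌈/⌉ c)}
  zero_mem' n := by
    rw [zero_coeff]
    exact zero_mem _
  add_mem' {x y} hx hy := (teichmuller_X_mul_map_C_mem_range_iff I c (x + y)).1 <| by
    rw [map_add, mul_add]
    exact add_mem ((teichmuller_X_mul_map_C_mem_range_iff I c x).2 hx)
      ((teichmuller_X_mul_map_C_mem_range_iff I c y).2 hy)
  smul_mem' a z hz := (teichmuller_X_mul_map_C_mem_range_iff I c (a * z)).1 <| by
    rw [map_mul, mul_left_comm]
    refine mul_mem ((mem_range_map_subtype_iff _ _).2 fun n => ?_)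
      ((teichmuller_X_mul_map_C_mem_range_iff I c z).2 hz)
    rw [map_coeff]
    exact Ideal.C_mem_ceilDivRees I c _

theorem mem_weightedPowIdeal {I : Ideal A} {c : ℕ} {z : WittVector p A} :
    z ∈ weightedPowIdeal p I c ↔ ∀ n, z.coeff n ∈ I ^ (p ^ n ⌈/⌉ c) :=
  Iff.rfl

theorem mem_weightedPowIdeal_of_coeff_mem {I : Ideal A} {M : ℕ} {u : WittVector p A}
    (hI : ∀ n, u.coeff n ∈ I) (hM : ∀ n, M ≤ n → u.coeff n = 0) :
    u ∈ weightedPowIdeal p I (p ^ M) := by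
  refine mem_weightedPowIdeal.2 fun n => ?_
  rcases lt_or_ge n M with hn | hn
  · have hle : p ^ n ⌈/⌉ p ^ M ≤ 1 := by
      rw [ceilDiv_le_iff_le_mul (pow_pos hp.out.pos M), mul_one]
      exact Nat.pow_le_pow_right hp.out.pos hn.le
    exact Ideal.pow_le_pow_right hle (by simpa using hI n)
  · rw [hM n hn]
    exact zero_mem _

theorem inWhat_of_mem_weightedPowIdeal {I : Ideal A} (hfg : I.FG) (hnil : I ≤ nilradical A)
    {M : ℕ} {z : WittVector p A} (hz : z ∈ weightedPowIdeal p I (p ^ M)) : InWhat p z := by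
  obtain ⟨K, hK⟩ := hfg.isNilpotent_iff_le_nilradical.2 hnil
  have hpM : 0 < p ^ M := pow_pos hp.out.pos M
  refine ⟨fun n => mem_nilradical.1 (hnil (Ideal.pow_le_self ?_ (hz n))), M + K, fun n hn => ?_⟩
  · rw [Ne, ← Nat.le_zero, ceilDiv_le_iff_le_mul hpM, mul_zero, Nat.le_zero]
    exact (pow_pos hp.out.pos n).ne'
  · have hceil : p ^ n ⌈/⌉ p ^ M = p ^ (n - M) := by
      rw [← pow_mul_pow_sub p (by omega : M ≤ n)]
      exact smul_ceilDiv hpM _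
    have hK_le : K ≤ p ^ n ⌈/⌉ p ^ M := hceil ▸
      (Nat.lt_pow_self hp.out.one_lt).le.trans (Nat.pow_le_pow_right hp.out.pos (by omega))
    simpa [hK] using Ideal.pow_le_pow_right hK_le (hz n)

end WeightedPowIdeal

variable (p) in
def formalCompletion (A : Type*) [CommRing A] : Ideal (WittVector p A) where
  carrier := {u | InWhat p u}
  zero_mem' := inWhat_of_mem_weightedPowIdeal (I := ⊥) (M := 0) Submodule.fg_bot bot_le
    (zero_mem _)
  add_mem' {u v} hu hv := by
    obtain ⟨I, hIfg, hInil, huI⟩ := hu.exists_fg_le_nilradical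
    obtain ⟨J, hJfg, hJnil, hvJ⟩ := hv.exists_fg_le_nilradical
    obtain ⟨Mu, hMu⟩ := hu.2
    obtain ⟨Mv, hMv⟩ := hv.2
    refine inWhat_of_mem_weightedPowIdeal (Submodule.FG.sup hIfg hJfg) (sup_le hInil hJnil)
      (M := max Mu Mv) (add_mem ?_ ?_)
    · exact mem_weightedPowIdeal_of_coeff_mem (fun n => Ideal.mem_sup_left (huI n))
        fun n hn => hMu n (le_of_max_le_left hn)
    · exact mem_weightedPowIdeal_of_coeff_mem (fun n => Ideal.mem_sup_right (hvJ n))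
        fun n hn => hMv n (le_of_max_le_right hn)
  smul_mem' a u hu := by
    obtain ⟨I, hIfg, hInil, huI⟩ := hu.exists_fg_le_nilradical
    obtain ⟨M, hM⟩ := hu.2
    exact inWhat_of_mem_weightedPowIdeal hIfg hInil
      (Ideal.mul_mem_left _ a (mem_weightedPowIdeal_of_coeff_mem huI hM))

end WittVector

theorem stmt2 (p : ℕ) [hp : Fact p.Prime] (A : Type*) [CommRing A] :
    InWhat p (0 : WittVector p A) ∧
    (∀ u v : WittVector p A, InWhat p u → InWhat p v → InWhat p (u + v)) ∧
    (∀ u : WittVector p A, InWhat p u → InWhat p (-u)) ∧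
    (∀ (a u : WittVector p A), InWhat p u → InWhat p (a * u)) :=
  ⟨(formalCompletion p A).zero_mem, fun _ _ => (formalCompletion p A).add_mem,
    fun _ => (formalCompletion p A).neg_mem, fun a _ => (formalCompletion p A).mul_mem_left a⟩
end

section
/- Let L, M, N ≥ 1 be integers. In the quotient of Z_{(p)}[Λ, U_0, U_1, ...] by the ideal generated by Λ^L, U_0^N, ..., U_{M−1}^N, U_M, U_{M+1}, ..., the image of the deformed Artin–Hasse exponential E_p(U, Λ, T) = Π_{ℓ≥0} E_p(U_ℓ, Λ^{p^ℓ}, T^{p^ℓ}) is a polynomial in T of degree at most (N−1)(p^M−1)/(p−1) + (L−1). -/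
/-! The subring `ℤ_{(p)} ⊆ ℚ` of `p`-integral rationals; a "ℤ_{(p)}-algebra" is a
commutative ring equipped with an algebra structure over this subring. -/

/-- The subring `ℤ_{(p)}` of `ℚ` consisting of rationals with denominator prime to `p`. -/
def Zploc (p : ℕ) (hp : p.Prime) : Subring ℚ where
  carrier := {q : ℚ | ¬ p ∣ q.den}
  zero_mem' := by simp [Rat.den_ofNat, hp.one_lt.ne', Nat.dvd_one]
  one_mem' := by simp [Rat.den_ofNat, hp.one_lt.ne', Nat.dvd_one]
  add_mem' := by
    intro a b ha hb h
    rcases (Nat.Prime.dvd_mul hp).1 (h.trans (Rat.add_den_dvd a b)) with h' | h'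
    exacts [ha h', hb h']
  mul_mem' := by
    intro a b ha hb h
    rcases (Nat.Prime.dvd_mul hp).1 (h.trans (Rat.mul_den_dvd a b)) with h' | h'
    exacts [ha h', hb h']
  neg_mem' := by intro a ha; simpa [Rat.neg_den] using ha

/-- Specialization of a rational number into a `ℤ_{(p)}`-algebra `A`,
defined (with junk value `0`) when the rational is `p`-integral. -/
noncomputable def padicSpec (p : ℕ) (hp : p.Prime) {A : Type*} [CommRing A]
    [Algebra (Zploc p hp) A] (q : ℚ) : A :=
  if h : ¬ p ∣ q.den then algebraMap (Zploc p hp) A ⟨q, h⟩ else 0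

/-- Specialization of a multivariate polynomial with rational (`p`-integral)
coefficients at a point of a `ℤ_{(p)}`-algebra `A`. -/
noncomputable def specPoly (p : ℕ) (hp : p.Prime) {A : Type*} [CommRing A]
    [Algebra (Zploc p hp) A] {σ : Type*} (P : MvPolynomial σ ℚ) (v : σ → A) : A :=
  ∑ m ∈ P.support, padicSpec p hp (MvPolynomial.coeff m P) * m.prod (fun i k => v i ^ k)

/-! The universal deformed Artin–Hasse exponential
`E_p(𝐔, Λ, T) = Π_{ℓ≥0} E_p(U_ℓ, Λ^{p^ℓ}, T^{p^ℓ})` has coefficients in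
`ℤ_{(p)}[Λ, U_0, U_1, …]`.  We realize each coefficient as a polynomial in
`ℚ[Λ, U_0, U_1, …]` via the identity `E_p = exp (log E_p)`, where
`log E_p(U,Λ,T) = Σ_{k≥0} Σ_{m≥1} ((−1)^{m−1}/(m·p^k))·c_{k,m}·T^{p^k m}` with
`c_{0,m} = U·Λ^{m−1}` and, for `k ≥ 1`,
`c_{k,m} = U^{p^k} Λ^{p^k(m−1)} − U^{p^{k−1}} Λ^{p^{k−1}(pm−1)}`
(these are polynomials), and then specialize the (p-integral) rational
coefficients into an arbitrary `ℤ_{(p)}`-algebra. -/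

/-- Coefficient of `T^j` in `log E_p(u, λ, T)` over a `ℚ`-algebra. -/
noncomputable def logEpCoeff (p : ℕ) {A : Type*} [CommRing A] [Algebra ℚ A]
    (u lam : A) (j : ℕ) : A :=
  if j = 0 then 0 else
    ∑ k ∈ Finset.range (j + 1),
      if p ^ k ∣ j then
        ((-1 : ℚ) ^ (j / p ^ k - 1) / ((j / p ^ k) * p ^ k)) •
          (if k = 0 then u * lam ^ (j - 1)
           else u ^ p ^ k * lam ^ (p ^ k * (j / p ^ k - 1)) -
                u ^ p ^ (k - 1) * lam ^ (p ^ (k - 1) * (p * (j / p ^ k) - 1)))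
      else 0

/-- The power series `log E_p(𝐔, Λ, T) = Σ_ℓ (log E_p)(U_ℓ, Λ^{p^ℓ}, T^{p^ℓ})`
over `ℚ[Λ, U_0, U_1, …]` (with `Λ` the variable `none` and `U_ℓ` the variable
`some ℓ`). -/
noncomputable def logEpVec (p : ℕ) : PowerSeries (MvPolynomial (Option ℕ) ℚ) :=
  PowerSeries.mk fun j =>
    ∑ l ∈ Finset.range (j + 1),
      if p ^ l ∣ j then
        logEpCoeff p (MvPolynomial.X (some l)) (MvPolynomial.X none ^ p ^ l) (j / p ^ l)
      else 0

/-- The coefficient of `T^n` in `E_p(𝐔, Λ, T) = exp (log E_p(𝐔, Λ, T))`, as a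
polynomial in `ℚ[Λ, U_0, U_1, …]` (its rational coefficients are `p`-integral). -/
noncomputable def EpVecCoeff (p n : ℕ) : MvPolynomial (Option ℕ) ℚ :=
  ∑ t ∈ Finset.range (n + 1),
    ((t.factorial : ℚ)⁻¹) • PowerSeries.coeff n (logEpVec p ^ t)

/-- The deformed Artin–Hasse exponential `E_p(a, λ, T)` for a vector `a` and an
element `λ` of an arbitrary `ℤ_{(p)}`-algebra `A`, obtained by specialization of
the universal series. -/
noncomputable def EpZ (p : ℕ) (hp : p.Prime) {A : Type*} [CommRing A]
    [Algebra (Zploc p hp) A] (a : ℕ → A) (lam : A) : PowerSeries A :=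
  PowerSeries.mk fun n => specPoly p hp (EpVecCoeff p n) (fun v => v.elim lam a)

/-!
STATEMENT 12: in the quotient of `ℤ_{(p)}[Λ, U_0, U_1, …]` by the ideal generated
by `Λ^L, U_0^N, …, U_{M−1}^N, U_M, U_{M+1}, …`, the image of `E_p(𝐔, Λ, T)` is a
polynomial in `T` of degree at most `(N−1)(p^M−1)/(p−1) + (L−1)`
(we write `(p^M−1)/(p−1) = Σ_{i<M} p^i`). -/

set_option synthInstance.maxHeartbeats 1000000
set_option maxHeartbeats 1000000

/-- The truncation ideal generated by `Λ^L`, `U_i^N` for `i < M` and `U_i` for `i ≥ M`. -/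
noncomputable def truncIdeal (p : ℕ) (hp : p.Prime) (L M N : ℕ) :
    Ideal (MvPolynomial (Option ℕ) (Zploc p hp)) :=
  Ideal.span ({MvPolynomial.X none ^ L} ∪
    ((fun i => MvPolynomial.X (some i) ^ N) '' {i : ℕ | i < M}) ∪
    ((fun i => MvPolynomial.X (some i)) '' {i : ℕ | M ≤ i}))

/-! Give `Λ` weight `1` and `U_ℓ` weight `p^ℓ`. Every monomial of `E_p(U_ℓ, Λ^{p^ℓ}, T^{p^ℓ})` has
the form `(U_ℓ T^{p^ℓ})^i (Λ^{p^ℓ} T^{p^ℓ})^j`, so the coefficient of `T^n` in `E_p(𝐔, Λ, T)` is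
weighted homogeneous of degree `n`. A monomial that survives in the quotient has `Λ`-exponent
`< L`, `U_i`-exponent `< N` for `i < M` and no `U_i` with `i ≥ M`, so its weight is at most
`(N−1)(1 + p + ⋯ + p^{M−1}) + (L−1)`. -/

open MvPolynomial

section WeightedHomogeneousSeries

variable {σ R : Type*} [CommSemiring R] {w : σ → ℕ} {f g : PowerSeries (MvPolynomial σ R)}

lemma isWeightedHomogeneous_coeff_mul (hf : ∀ j, IsWeightedHomogeneous w (PowerSeries.coeff j f) j)
    (hg : ∀ j, IsWeightedHomogeneous w (PowerSeries.coeff j g) j) (n : ℕ) :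
    IsWeightedHomogeneous w (PowerSeries.coeff n (f * g)) n := by
  rw [PowerSeries.coeff_mul]
  refine IsWeightedHomogeneous.sum _ _ _ fun x hx => ?_
  rw [← Finset.HasAntidiagonal.mem_antidiagonal.1 hx]
  exact (hf x.1).mul (hg x.2)

lemma isWeightedHomogeneous_coeff_pow (hf : ∀ j, IsWeightedHomogeneous w (PowerSeries.coeff j f) j)
    (t n : ℕ) : IsWeightedHomogeneous w (PowerSeries.coeff n (f ^ t)) n := by
  induction t generalizing n with
  | zero =>
    rw [pow_zero, PowerSeries.coeff_one]
    split_ifs with h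
    · exact h ▸ isWeightedHomogeneous_one R w
    · exact isWeightedHomogeneous_zero R w n
  | succ t ih => rw [pow_succ]; exact isWeightedHomogeneous_coeff_mul ih hf n

end WeightedHomogeneousSeries

def artinHasseWeight (p : ℕ) : Option ℕ → ℕ := fun o => o.elim 1 (p ^ ·)

section ArtinHasseWeight

variable {p : ℕ}

lemma isWeightedHomogeneous_X_pow_mul_X_pow (R : Type*) [CommSemiring R] {l a b n : ℕ}
    (h : p ^ l * (a + b) = n) :
    IsWeightedHomogeneous (artinHasseWeight p)
      (X (some l) ^ a * (X none ^ p ^ l) ^ b : MvPolynomial (Option ℕ) R) n := by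
  convert ((isWeightedHomogeneous_X R _ (some l)).pow a).mul
    (((isWeightedHomogeneous_X R _ none).pow (p ^ l)).pow b) using 1
  simp only [artinHasseWeight, Option.elim, smul_eq_mul, ← h]
  ring

lemma isWeightedHomogeneous_logEpCoeff (hp : 0 < p) (l j : ℕ) :
    IsWeightedHomogeneous (artinHasseWeight p)
      (logEpCoeff p (X (some l)) (X none ^ p ^ l) j : MvPolynomial (Option ℕ) ℚ) (p ^ l * j) := by
  unfold logEpCoeff
  split_ifs with hj
  · exact isWeightedHomogeneous_zero ℚ _ _
  refine IsWeightedHomogeneous.sum _ _ _ fun k _ => ?_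
  split_ifs with hk hk0
  · subst hk0
    refine (weightedHomogeneousSubmodule ℚ _ _).smul_mem _ ?_
    simpa using isWeightedHomogeneous_X_pow_mul_X_pow ℚ (p := p) (l := l) (a := 1) (b := j - 1)
      (by congr 1; omega)
  · obtain ⟨d, rfl⟩ := hk
    obtain ⟨k, rfl⟩ : ∃ k', k = k' + 1 := Nat.exists_eq_succ_of_ne_zero hk0
    have hd : 1 ≤ d := Nat.one_le_iff_ne_zero.2 (by rintro rfl; simp at hj)
    have hpd : 1 ≤ p * d := Nat.one_le_iff_ne_zero.2 (by positivity)
    rw [Nat.mul_div_cancel_left d (by positivity), Nat.add_sub_cancel]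
    refine (weightedHomogeneousSubmodule ℚ _ _).smul_mem _ (IsWeightedHomogeneous.sub ?_ ?_) <;>
      refine isWeightedHomogeneous_X_pow_mul_X_pow ℚ ?_ <;> zify [hd, hpd] <;> ring
  · exact isWeightedHomogeneous_zero ℚ _ _

lemma isWeightedHomogeneous_coeff_logEpVec (hp : 0 < p) (j : ℕ) :
    IsWeightedHomogeneous (artinHasseWeight p) (PowerSeries.coeff j (logEpVec p)) j := by
  rw [logEpVec, PowerSeries.coeff_mk]
  refine IsWeightedHomogeneous.sum _ _ _ fun l _ => ?_
  split_ifs with hl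
  · simpa only [Nat.mul_div_cancel' hl] using isWeightedHomogeneous_logEpCoeff hp l (j / p ^ l)
  · exact isWeightedHomogeneous_zero ℚ _ _

lemma isWeightedHomogeneous_EpVecCoeff (hp : 0 < p) (n : ℕ) :
    IsWeightedHomogeneous (artinHasseWeight p) (EpVecCoeff p n) n :=
  IsWeightedHomogeneous.sum _ _ _ fun t _ => (weightedHomogeneousSubmodule ℚ _ _).smul_mem _
    (isWeightedHomogeneous_coeff_pow (isWeightedHomogeneous_coeff_logEpVec hp) t n)

lemma weight_artinHasseWeight_le {L M N : ℕ} {m : Option ℕ →₀ ℕ} (hΛ : m none < L)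
    (hlow : ∀ i < M, m (some i) < N) (hhigh : ∀ i, M ≤ i → m (some i) = 0) :
    Finsupp.weight (artinHasseWeight p) m ≤ (N - 1) * ∑ i ∈ Finset.range M, p ^ i + (L - 1) := by
  have hsupp : m.support ⊆ insert none ((Finset.range M).image some) := by
    rintro (_ | i) hi
    · exact Finset.mem_insert_self _ _
    · refine Finset.mem_insert_of_mem (Finset.mem_image_of_mem _ (Finset.mem_range.2 ?_))
      by_contra h
      exact Finsupp.mem_support_iff.1 hi (hhigh i (not_lt.1 h))
  rw [Finsupp.weight_apply, Finsupp.sum_of_support_subset m hsupp _ (by simp),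
    Finset.sum_insert (by simp), Finset.sum_image (by simp), Finset.mul_sum, add_comm]
  simp only [artinHasseWeight, Option.elim, smul_eq_mul, mul_one]
  gcongr with i hi
  · exact Nat.le_sub_one_of_lt (hlow i (Finset.mem_range.1 hi))
  · exact Nat.le_sub_one_of_lt hΛ

end ArtinHasseWeight

lemma monomial_mem_of_X_pow_mem {σ R : Type*} [CommSemiring R] {I : Ideal (MvPolynomial σ R)}
    {m : σ →₀ ℕ} {i : σ} {k : ℕ} (hk : k ≤ m i) (h : X i ^ k ∈ I) : monomial m (1 : R) ∈ I := by
  rw [X_pow_eq_monomial] at h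
  rw [← tsub_add_cancel_of_le (Finsupp.single_le_iff.2 hk), ← one_mul (1 : R), ← monomial_mul]
  exact I.mul_mem_left _ h

lemma monomial_mem_truncIdeal {p : ℕ} (hp : p.Prime) {L M N : ℕ} {m : Option ℕ →₀ ℕ}
    (hm : (N - 1) * ∑ i ∈ Finset.range M, p ^ i + (L - 1) < Finsupp.weight (artinHasseWeight p) m) :
    monomial m 1 ∈ truncIdeal p hp L M N := by
  by_contra hI
  refine hm.not_ge (weight_artinHasseWeight_le ?_ ?_ ?_)
  · by_contra! h
    exact hI (monomial_mem_of_X_pow_mem h (Ideal.subset_span (Or.inl (Or.inl rfl))))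
  · intro i hi
    by_contra! h
    exact hI (monomial_mem_of_X_pow_mem h (Ideal.subset_span (Or.inl (Or.inr ⟨i, hi, rfl⟩))))
  · intro i hi
    by_contra h
    exact hI (monomial_mem_of_X_pow_mem (Nat.one_le_iff_ne_zero.2 h)
      (by rw [pow_one]; exact Ideal.subset_span (Or.inr ⟨i, hi, rfl⟩)))

lemma specPoly_quotient_mk_X_eq_zero {p : ℕ} (hp : p.Prime) {σ : Type*}
    {I : Ideal (MvPolynomial σ (Zploc p hp))} {P : MvPolynomial σ ℚ}
    (h : ∀ m ∈ P.support, monomial m 1 ∈ I) :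
    specPoly p hp P (fun i => Ideal.Quotient.mk I (X i)) = 0 := by
  refine Finset.sum_eq_zero fun m hm => ?_
  have hprod : (m.prod fun i k => Ideal.Quotient.mk I (X i) ^ k) =
      Ideal.Quotient.mk I (monomial m 1) := by
    rw [monomial_eq, C_1, one_mul, map_finsuppProd]
    simp only [map_pow]
  rw [hprod, Ideal.Quotient.eq_zero_iff_mem.2 (h m hm), mul_zero]

theorem stmt12_general (p : ℕ) (hp : p.Prime) (L M N : ℕ) :
    ∀ n : ℕ, (N - 1) * (∑ i ∈ Finset.range M, p ^ i) + (L - 1) < n →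
      PowerSeries.coeff n
        (EpZ p hp
          (fun i => Ideal.Quotient.mk (truncIdeal p hp L M N) (MvPolynomial.X (some i)))
          (Ideal.Quotient.mk (truncIdeal p hp L M N) (MvPolynomial.X none))) = 0 := by
  intro n hn
  have hv : (fun o : Option ℕ => o.elim (Ideal.Quotient.mk (truncIdeal p hp L M N) (X none))
      fun i => Ideal.Quotient.mk (truncIdeal p hp L M N) (X (some i))) =
      fun o => Ideal.Quotient.mk (truncIdeal p hp L M N) (X o) := by
    funext o; cases o <;> rfl
  rw [EpZ, PowerSeries.coeff_mk, hv]
  refine specPoly_quotient_mk_X_eq_zero hp fun m hm => monomial_mem_truncIdeal hp ?_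
  rwa [isWeightedHomogeneous_EpVecCoeff hp.pos n (mem_support_iff.1 hm)]

theorem stmt12 (p : ℕ) (hp : p.Prime) (L M N : ℕ) (hL : 1 ≤ L) (hM : 1 ≤ M)
    (hN : 1 ≤ N) :
    ∀ n : ℕ, (N - 1) * (∑ i ∈ Finset.range M, p ^ i) + (L - 1) < n →
      PowerSeries.coeff n
        (EpZ p hp
          (fun i => Ideal.Quotient.mk (truncIdeal p hp L M N) (MvPolynomial.X (some i)))
          (Ideal.Quotient.mk (truncIdeal p hp L M N) (MvPolynomial.X none))) = 0 :=
  stmt12_general p hp L M N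
end

section
/- For an odd prime p, the element p ∈ W(Z) (the image of p under the unique ring map Z → W(Z), equivalently p times the multiplicative unit of the Witt ring) has coordinates p = (p, 1 − p^{p−1}, a_2, a_3, ...) where for each n ≥ 2 the coordinate a_n is p^{p−1} times a principal p-adic unit (i.e. v_p(a_n) = p−1 when viewed in Z_p). For p = 2, one has 2 = (2, −1, a_2, a_3, ...) in W(Z) with v_2(a_n) = 2^{n−2} + 1 for n ≥ 2. -/
/-!
Write `a_n` for the coordinates of `p` and read the ghost equation
`∑_{i ≤ n} p^i a_i^{p^{n-i}} = p` at `n = 0, 1` to get `a_0 = p`, `a_1 = 1 - p^{p-1}`.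
For odd `p`, `(1 + p b)^{p^j} = 1 + p^{j+1} b (1 + p c)`, so the `i = 1` term is
`p - p^{n+p-1}` modulo `p^{n+p}`; by induction `p^{p-1} ∣ a_i` for `2 ≤ i < n`, which makes
the terms `i ≠ 1, n` vanish modulo `p^{n+p}`. Hence `p^n a_n ≡ p^{n+p-1}`, i.e.
`a_n ≡ p^{p-1} mod p^p`. For `p = 2` the `i = 1` term is constant and the dominant term is
`2^{n-1} a_{n-1}^2`, of exact valuation `n + 2^{n-2} + 1`; all other terms are divisible by a
higher power of `2`, which propagates `a_n = 2^{2^{n-2}+1} · odd`.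
-/

open Finset

theorem exists_one_add_mul_pow_eq {R : Type*} [CommRing R] {p : ℕ} (hp : Odd p) (b : R) :
    ∃ c : R, (1 + p * b) ^ p = 1 + p ^ 2 * b * (1 + p * c) := by
  obtain ⟨c, hc⟩ := odd_sq_dvd_geom_sum₂_sub 1 b hp
  refine ⟨c, ?_⟩
  have hgeom := (Commute.one_right (1 + (p : R) * b)).geom_sum₂_mul p
  simp only [one_pow, mul_one, add_sub_cancel_left] at hgeom hc
  linear_combination -hgeom + p * b * hc

theorem exists_one_add_mul_pow_pow_eq {R : Type*} [CommRing R] {p : ℕ} (hp : Odd p) (b : R)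
    (j : ℕ) : ∃ c : R, (1 + p * b) ^ p ^ j = 1 + p ^ (j + 1) * b * (1 + p * c) := by
  induction j with
  | zero => exact ⟨0, by simp⟩
  | succ j ih =>
    obtain ⟨c, hc⟩ := ih
    obtain ⟨d, hd⟩ := exists_one_add_mul_pow_eq hp (p ^ j * b * (1 + p * c))
    refine ⟨c + d + p * c * d, ?_⟩
    rw [pow_succ, pow_mul, hc]
    linear_combination hd

theorem PadicInt.isUnit_one_add_mul {p : ℕ} [Fact p.Prime] (t : ℤ_[p]) :
    IsUnit (1 + p * t) := by
  have h : -(p * t) ∈ nonunits ℤ_[p] := PadicInt.mem_nonunits.mpr <|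
    (PadicInt.norm_lt_one_iff_dvd _).mpr (dvd_neg.mpr (dvd_mul_right _ _))
  simpa using IsLocalRing.isUnit_one_sub_self_of_mem_nonunits _ h

theorem pow_add_mul_dvd_pow_mul_pow {M : Type*} [CommMonoid M] {q x : M} {k : ℕ} (h : q ^ k ∣ x)
    (i m : ℕ) : q ^ (i + k * m) ∣ q ^ i * x ^ m := by
  rw [pow_add, pow_mul]
  exact mul_dvd_mul_left _ (pow_dvd_pow_of_dvd h m)

theorem Nat.add_le_pow {p n : ℕ} (hp : 2 ≤ p) (hn : 2 ≤ n) : n + p ≤ p ^ n := by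
  induction n, hn using Nat.le_induction with
  | base => nlinarith
  | succ n hn ih =>
    rw [pow_succ]
    nlinarith

theorem Nat.add_le_sub_one_mul_pow {p m : ℕ} (hp : 3 ≤ p) (hm : 1 ≤ m) :
    m + p ≤ (p - 1) * p ^ m := by
  have h1 : m < p ^ m := Nat.lt_pow_self (by omega)
  have h2 : p ≤ p ^ m := Nat.le_self_pow (by omega) p
  have h3 : 2 * p ^ m ≤ (p - 1) * p ^ m := Nat.mul_le_mul_right _ (by omega)
  omega

namespace WittVector

variable {p : ℕ} [hp : Fact p.Prime]

local notation "𝕎" => WittVector p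

theorem sum_pow_mul_coeff_natCast_pow {R : Type*} [CommRing R] (m n : ℕ) :
    ∑ i ∈ range (n + 1), (p : R) ^ i * (m : 𝕎 R).coeff i ^ p ^ (n - i) = m := by
  rw [← aeval_wittPolynomial (R := ℤ), ← ghostComponent_apply, map_natCast]

theorem natCast_coeff_zero {R : Type*} [CommRing R] (m : ℕ) : (m : 𝕎 R).coeff 0 = m := by
  simpa using sum_pow_mul_coeff_natCast_pow (p := p) (R := R) m 0

theorem natCast_self_coeff_one : (p : 𝕎 ℤ).coeff 1 = 1 - p ^ (p - 1) := by
  have h := sum_pow_mul_coeff_natCast_pow (p := p) (R := ℤ) p 1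
  rw [sum_range_succ, sum_range_one, natCast_coeff_zero] at h
  have hp1 : p = p - 1 + 1 := (Nat.sub_add_cancel hp.out.one_le).symm
  apply mul_left_cancel₀ (Nat.cast_ne_zero.mpr hp.out.ne_zero : (p : ℤ) ≠ 0)
  nth_rewrite 3 [hp1] at h
  simp only [pow_zero, one_mul, pow_one, Nat.sub_self] at h
  linear_combination h

theorem natCast_self_ghost_eq {n : ℕ} (hn : 2 ≤ n) :
    (p : ℤ) ^ p ^ n + p * (1 - (p : ℤ) ^ (p - 1)) ^ p ^ (n - 1)
      + ∑ i ∈ Ico 2 n, (p : ℤ) ^ i * (p : 𝕎 ℤ).coeff i ^ p ^ (n - i)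
      + p ^ n * (p : 𝕎 ℤ).coeff n = p := by
  have h := sum_pow_mul_coeff_natCast_pow (p := p) (R := ℤ) p n
  rw [sum_range_succ, range_eq_Ico, ← sum_Ico_consecutive _ (Nat.zero_le 2) hn, ← range_eq_Ico,
    sum_range_succ, sum_range_one, natCast_coeff_zero, natCast_self_coeff_one] at h
  simpa using h

theorem natCast_self_coeff_of_ne_two (hp2 : p ≠ 2) {n : ℕ} (hn : 2 ≤ n) :
    ∃ t : ℤ, (p : 𝕎 ℤ).coeff n = p ^ (p - 1) * (1 + p * t) := by
  induction n using Nat.strong_induction_on with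
  | _ n ih =>
  have hp3 : 3 ≤ p := by have := hp.out.two_le; omega
  obtain ⟨k, hk⟩ : ∃ k, p = k + 2 := ⟨p - 2, by omega⟩
  have hsum : (p : ℤ) ^ (n + p) ∣
      ∑ i ∈ Ico 2 n, (p : ℤ) ^ i * (p : 𝕎 ℤ).coeff i ^ p ^ (n - i) := by
    refine dvd_sum fun i hi => ?_
    obtain ⟨hi2, hin⟩ := mem_Ico.mp hi
    obtain ⟨t, ht⟩ := ih i hin hi2
    refine (pow_dvd_pow _ ?_).trans (pow_add_mul_dvd_pow_mul_pow ⟨_, ht⟩ i (p ^ (n - i)))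
    have := Nat.add_le_sub_one_mul_pow hp3 (Nat.sub_pos_of_lt hin)
    omega
  have hlead : (p : ℤ) ^ (n + p) ∣ p ^ p ^ n := pow_dvd_pow _ (Nat.add_le_pow hp.out.two_le hn)
  obtain ⟨s, hs⟩ := dvd_add hlead hsum
  obtain ⟨c, hc⟩ :=
    exists_one_add_mul_pow_pow_eq (hp.out.odd_of_ne_two hp2) (-(p : ℤ) ^ k) (n - 1)
  have hghost := natCast_self_ghost_eq (p := p) hn
  have hp1 : p - 1 = k + 1 := by omega
  rw [hp1, show 1 - (p : ℤ) ^ (k + 1) = 1 + p * -(p : ℤ) ^ k by ring] at hghost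
  rw [Nat.sub_add_cancel (by omega : 1 ≤ n)] at hc
  rw [show n + p = n + k + 2 by omega] at hs
  refine ⟨c - s, mul_left_cancel₀ (pow_ne_zero n (Nat.cast_ne_zero.mpr hp.out.ne_zero)) ?_⟩
  rw [hp1]
  linear_combination hghost - p * hc - hs

theorem natCast_two_coeff_add_two (j : ℕ) :
    ∃ t : ℤ, ((2 : ℕ) : WittVector 2 ℤ).coeff (j + 2) = 2 ^ (2 ^ j + 1) * (1 + 2 * t) := by
  induction j using Nat.strong_induction_on with
  | _ j ih =>
  have hghost := natCast_self_ghost_eq (p := 2) (n := j + 2) (by omega)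
  rcases j with _ | j
  · refine ⟨-1, ?_⟩
    norm_num at hghost ⊢
    linarith
  have hsum : (2 : ℤ) ^ (j + 2 ^ (j + 1) + 5) ∣
      ∑ i ∈ Ico 2 (j + 2), (2 : ℤ) ^ i * ((2 : ℕ) : WittVector 2 ℤ).coeff i ^ 2 ^ (j + 3 - i) := by
    refine dvd_sum fun i hi => ?_
    obtain ⟨l, rfl⟩ : ∃ l, i = l + 2 := ⟨i - 2, by grind⟩
    have hl : l < j := by grind
    obtain ⟨t, ht⟩ := ih l (by omega)
    refine (pow_dvd_pow _ ?_).trans (pow_add_mul_dvd_pow_mul_pow ⟨_, ht⟩ _ _)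
    have hsplit : 2 ^ l * 2 ^ (j + 1 - l) = 2 ^ (j + 1) := by rw [← pow_add]; congr 1; omega
    have := Nat.add_le_pow le_rfl (by omega : 2 ≤ j + 1 - l)
    rw [show j + 3 - (l + 2) = j + 1 - l by omega, add_mul, hsplit]
    omega
  have hlead : (2 : ℤ) ^ (j + 2 ^ (j + 1) + 5) ∣ 2 ^ 2 ^ (j + 3) := by
    refine pow_dvd_pow _ ?_
    have := Nat.lt_two_pow_self (n := j + 1)
    rw [pow_add 2 (j + 1) 2]
    omega
  obtain ⟨s, hs⟩ := dvd_add hlead hsum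
  obtain ⟨t, ht⟩ := ih j (by omega)
  rw [sum_Ico_succ_top (by omega), ht, show j + 1 + 2 - (j + 2) = 1 by omega] at hghost
  have hneg : (-1 : ℤ) ^ 2 ^ (j + 2) = 1 :=
    Even.neg_one_pow (Nat.even_pow.mpr ⟨even_two, by omega⟩)
  norm_num [hneg] at hghost
  refine ⟨-1 - 2 * t - 2 * t ^ 2 - s, mul_left_cancel₀ (pow_ne_zero (j + 3) two_ne_zero) ?_⟩
  rw [pow_succ 2 j]
  linear_combination hghost - hs

end WittVector

theorem stmt14 (p : ℕ) [hp : Fact p.Prime] :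
    ((p : WittVector p ℤ).coeff 0 = (p : ℤ)) ∧
    ((p : WittVector p ℤ).coeff 1 = 1 - (p : ℤ) ^ (p - 1)) ∧
    (p ≠ 2 → ∀ n, 2 ≤ n → ∃ ε : ℤ_[p],
      IsUnit ε ∧ ((p : ℤ_[p]) ∣ (ε - 1)) ∧
      (((p : WittVector p ℤ).coeff n : ℤ_[p]) = ε * (p : ℤ_[p]) ^ (p - 1))) ∧
    (p = 2 → ∀ n, 2 ≤ n → ∃ ε : ℤ_[p],
      IsUnit ε ∧
      (((p : WittVector p ℤ).coeff n : ℤ_[p]) = ε * (p : ℤ_[p]) ^ (2 ^ (n - 2) + 1))) := by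
  refine ⟨WittVector.natCast_coeff_zero p, WittVector.natCast_self_coeff_one,
    fun hp2 n hn => ?_, fun hp2 n hn => ?_⟩
  · obtain ⟨t, ht⟩ := WittVector.natCast_self_coeff_of_ne_two hp2 hn
    exact ⟨1 + p * t, PadicInt.isUnit_one_add_mul _, ⟨t, by ring⟩, by rw [ht]; push_cast; ring⟩
  · subst hp2
    obtain ⟨j, rfl⟩ : ∃ j, n = j + 2 := ⟨n - 2, by omega⟩
    obtain ⟨t, ht⟩ := WittVector.natCast_two_coeff_add_two j
    refine ⟨1 + 2 * t, PadicInt.isUnit_one_add_mul _, ?_⟩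
    rw [ht, Nat.add_sub_cancel]
    push_cast
    ring
end
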